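/- arXiv:2107.13776 — 3 statements merged into one kernel-verified Lean document; each statement's English description precedes it below -/
import Mathlib

section
/- For every integer m ≥ 1 and every real number z, the confluent hypergeometric series ₁F₁(m, 1, z) terminates after Kummer's transformation: ∑'_{n=0}^{∞} (m)_n · z^n / (n!)² = exp(z) · ∑_{i=0}^{m−1} [(m−1)! / ((m−1−i)! · (i!)²)] · z^i, where the left-hand side is the (absolutely convergent) infinite sum taken as a tsum over ℕ. -/
/-- The rising factorial (Pochhammer symbol): `(m)_n = m·(m+1)···(m+n−1)`, with `(m)_0 = 1`. -/
def risingFactorial (m : ℕ) : ℕ → ℕ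
  | 0 => 1
  | n + 1 => risingFactorial m n * (m + n)

/-!
Write `m = k + 1`. Since `(k+1)_n / (n!)² = C(k+n, n) / n!` and
`k! / ((k-i)! (i!)²) = C(k, i) / i!`, both sides are power series in `z`. Multiplying the
polynomial `∑ C(k, i) zⁱ / i!` by `exp z = ∑ zʲ / j!` (Cauchy product), the coefficient of `zⁿ`
is `∑ᵢ C(k, i) / (i! (n-i)!) = (1/n!) ∑ᵢ C(k, i) C(n, i) = C(k+n, n) / n!` by Vandermonde.
-/

open Finset Nat

theorem risingFactorial_eq_ascFactorial (m n : ℕ) : risingFactorial m n = m.ascFactorial n := by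
  induction n with
  | zero => rfl
  | succ n ih => rw [risingFactorial, ascFactorial_succ, ih, Nat.mul_comm]

theorem cast_ascFactorial_succ_div_factorial_sq (k n : ℕ) :
    ((k + 1).ascFactorial n : ℝ) / (n ! : ℝ) ^ 2 = (k + n).choose n / n ! := by
  rw [ascFactorial_eq_factorial_mul_choose]
  push_cast
  field_simp

theorem factorial_div_factorial_mul_factorial_sq {k i : ℕ} (hi : i ≤ k) :
    (k ! : ℝ) / ((k - i)! * (i ! : ℝ) ^ 2) = k.choose i / i ! := by
  rw [cast_choose ℝ hi]
  field_simp

theorem sum_range_choose_mul_choose (k n : ℕ) :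
    ∑ i ∈ range (n + 1), k.choose i * n.choose i = (k + n).choose n := by
  rw [add_choose_eq, sum_antidiagonal_eq_sum_range_succ (fun i j => k.choose i * n.choose j)]
  refine sum_congr rfl fun i hi => ?_
  rw [choose_symm (mem_range_succ_iff.mp hi)]

theorem sum_range_choose_div_factorial_div_factorial (k n : ℕ) :
    ∑ i ∈ range (n + 1), (k.choose i / i ! : ℝ) / (n - i)! = (k + n).choose n / n ! := by
  rw [← sum_range_choose_mul_choose, cast_sum, sum_div]
  refine sum_congr rfl fun i hi => ?_
  rw [cast_mul, cast_choose ℝ (mem_range_succ_iff.mp hi)]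
  field_simp

theorem exp_mul_sum_range_eq_tsum (a : ℕ → ℝ) {N : ℕ} (ha : ∀ i, N ≤ i → a i = 0) (z : ℝ) :
    Real.exp z * ∑ i ∈ range N, a i * z ^ i
      = ∑' n, (∑ i ∈ range (n + 1), a i / (n - i)!) * z ^ n := by
  have ha' : ∀ i ∉ range N, a i * z ^ i = 0 := fun i hi => by
    rw [ha i (not_lt.mp (mem_range.not.mp hi)), zero_mul]
  have hpoly : Summable fun i => ‖a i * z ^ i‖ :=
    summable_of_ne_finset_zero (s := range N) fun i hi => by rw [ha' i hi, norm_zero]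
  rw [Real.exp_eq_exp_ℝ, ← (NormedSpace.expSeries_div_hasSum_exp z).tsum_eq, ← tsum_eq_sum (L := .unconditional ℕ) ha',
    mul_comm, tsum_mul_tsum_eq_tsum_sum_range_of_summable_norm hpoly
      (NormedSpace.norm_expSeries_div_summable z)]
  refine tsum_congr fun n => ?_
  rw [sum_mul]
  refine sum_congr rfl fun i hi => ?_
  rw [← pow_sub_mul_pow z (mem_range_succ_iff.mp hi)]
  ring

/-- For every integer `m ≥ 1` and real `z`, the confluent hypergeometric series
`₁F₁(m, 1, z) = ∑_{n} (m)_n z^n / (n!)²` terminates after Kummer's transformation: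
`₁F₁(m, 1, z) = exp z · ∑_{i=0}^{m-1} (m-1)!/((m-1-i)!·(i!)²) · z^i`. -/
theorem kummer_transform_terminates (m : ℕ) (hm : 1 ≤ m) (z : ℝ) :
    ∑' n : ℕ, (risingFactorial m n : ℝ) * z ^ n / ((Nat.factorial n : ℝ)) ^ 2
      = Real.exp z *
        ∑ i ∈ Finset.range m,
          ((Nat.factorial (m - 1) : ℝ) /
              ((Nat.factorial (m - 1 - i) : ℝ) * (Nat.factorial i : ℝ) ^ 2)) * z ^ i := by
  obtain ⟨k, rfl⟩ := exists_add_of_le hm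
  rw [add_comm 1 k, Nat.add_sub_cancel]
  have hpoly : ∀ i ∈ range (k + 1), (k ! : ℝ) / ((k - i)! * (i ! : ℝ) ^ 2) * z ^ i
      = (k.choose i / i ! : ℝ) * z ^ i := fun i hi => by
    rw [factorial_div_factorial_mul_factorial_sq (mem_range_succ_iff.mp hi)]
  have hvanish : ∀ i, k + 1 ≤ i → (k.choose i / i ! : ℝ) = 0 := fun i hi => by
    rw [choose_eq_zero_of_lt hi, cast_zero, zero_div]
  rw [sum_congr rfl hpoly, exp_mul_sum_range_eq_tsum _ hvanish]
  refine tsum_congr fun n => ?_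
  rw [sum_range_choose_div_factorial_div_factorial, risingFactorial_eq_ascFactorial,
    mul_div_right_comm, cast_ascFactorial_succ_div_factorial_sq]
end

section
/- Let b > 0, Ω ≥ 0 and let m ≥ 1 be an integer. Then ∫_0^∞ f̃(y; b, m, Ω) dy = 1; that is, the integer-order squared shadowed-Rician density is a probability density on [0, ∞). -/
open MeasureTheory

/-- The integer-order squared shadowed-Rician (SSR) density with parameters
`b > 0`, `Ω ≥ 0` and integer fading order `m ≥ 1`. -/
noncomputable def ssrPdf (b : ℝ) (m : ℕ) (Ω : ℝ) (y : ℝ) : ℝ :=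
  (1 / (2 * b)) * (2 * b * m / (2 * b * m + Ω)) ^ m *
    Real.exp (-(m * y) / (2 * b * m + Ω)) *
    ∑ i ∈ Finset.range m,
      ((Nat.factorial (m - 1) : ℝ) /
          ((Nat.factorial (m - 1 - i) : ℝ) * (Nat.factorial i : ℝ) ^ 2)) *
        (Ω * y / (2 * b * (2 * b * m + Ω))) ^ i

/-! For integer `m`, the SSR density is a mixture of the Erlang densities with shapes
`1, …, m` and common rate `m / (2bm + Ω)`, weighted by the binomial law with `m - 1` trials
and success probability `Ω / (2bm + Ω)`. Each Erlang density integrates to one, and the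
weights sum to `(Ω / (2bm + Ω) + 2bm / (2bm + Ω)) ^ (m - 1) = 1`. -/

open ProbabilityTheory Finset

lemma gammaPDFReal_natCast_add_one (i : ℕ) (r : ℝ) {x : ℝ} (hx : 0 ≤ x) :
    gammaPDFReal (i + 1) r x = r ^ (i + 1) / i.factorial * x ^ i * Real.exp (-(r * x)) := by
  rw [gammaPDFReal, if_pos hx, Real.Gamma_nat_eq_factorial, add_sub_cancel_right,
    Real.rpow_natCast, ← Nat.cast_add_one, Real.rpow_natCast]

lemma setIntegral_gammaPDFReal_Ioi_eq_one {a r : ℝ} (ha : 0 < a) (hr : 0 < r) :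
    ∫ x in Set.Ioi 0, gammaPDFReal a r x = 1 := by
  rw [setIntegral_congr_fun measurableSet_Ioi (g := fun x => r ^ a / Real.Gamma a *
      (x ^ (a - 1) * Real.exp (-(r * x))))
      (fun x (hx : 0 < x) => by rw [gammaPDFReal, if_pos hx.le, mul_assoc]),
    integral_const_mul, Real.integral_rpow_mul_exp_neg_mul_Ioi ha hr,
    Real.div_rpow zero_le_one hr.le, Real.one_rpow]
  field_simp [(Real.Gamma_pos_of_pos ha).ne', (Real.rpow_pos_of_pos hr a).ne']

lemma ssrPdf_succ_eq_sum_gammaPDFReal {b Ω : ℝ} (hb : b ≠ 0) (n : ℕ)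
    (hA : 2 * b * (n + 1) + Ω ≠ 0) {y : ℝ} (hy : 0 ≤ y) :
    ssrPdf b (n + 1) Ω y = ∑ i ∈ range (n + 1),
      n.choose i * (Ω / (2 * b * (n + 1) + Ω)) ^ i *
        (2 * b * (n + 1) / (2 * b * (n + 1) + Ω)) ^ (n - i) *
        gammaPDFReal (i + 1) ((n + 1) / (2 * b * (n + 1) + Ω)) y := by
  simp only [ssrPdf, Nat.cast_add_one, Nat.add_sub_cancel, mul_sum]
  refine sum_congr rfl fun i hi => ?_
  obtain ⟨k, rfl⟩ : ∃ k, n = i + k := Nat.exists_eq_add_of_le (mem_range_succ_iff.mp hi)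
  rw [gammaPDFReal_natCast_add_one i _ hy, Nat.cast_choose ℝ (Nat.le_add_right i k),
    Nat.add_sub_cancel_left]
  generalize hM : ((i + k : ℕ) : ℝ) + 1 = M at hA ⊢
  have hM0 : M ≠ 0 := by rw [← hM]; positivity
  rw [show -(M * y) / (2 * b * M + Ω) = -(M / (2 * b * M + Ω) * y) by ring]
  simp only [div_pow, mul_pow, pow_add]
  field_simp

/-- The integer-order squared shadowed-Rician density integrates to one on `[0, ∞)`:
it is a probability density. -/
theorem ssr_pdf_integral_eq_one (b Ω : ℝ) (hb : 0 < b) (hΩ : 0 ≤ Ω) (m : ℕ) (hm : 1 ≤ m) :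
    ∫ y in Set.Ioi (0:ℝ), ssrPdf b m Ω y = 1 := by
  obtain ⟨n, rfl⟩ := Nat.exists_eq_add_of_le' hm
  set A := 2 * b * (n + 1) + Ω
  have hA : 0 < A := by positivity
  have hrate : 0 < (n + 1) / A := by positivity
  have hgamma (i : ℕ) : ∫ y in Set.Ioi 0, gammaPDFReal (i + 1) ((n + 1) / A) y = 1 :=
    setIntegral_gammaPDFReal_Ioi_eq_one (by positivity) hrate
  calc ∫ y in Set.Ioi 0, ssrPdf b (n + 1) Ω y
      = ∫ y in Set.Ioi 0, ∑ i ∈ range (n + 1), n.choose i * (Ω / A) ^ i *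
          (2 * b * (n + 1) / A) ^ (n - i) * gammaPDFReal (i + 1) ((n + 1) / A) y :=
        setIntegral_congr_fun measurableSet_Ioi fun y hy =>
          ssrPdf_succ_eq_sum_gammaPDFReal hb.ne' n hA.ne' (le_of_lt hy)
    _ = ∑ i ∈ range (n + 1), n.choose i * (Ω / A) ^ i * (2 * b * (n + 1) / A) ^ (n - i) := by
        rw [integral_finsetSum _ fun i _ =>
          (Integrable.of_integral_ne_zero (by rw [hgamma]; exact one_ne_zero)).const_mul _]
        simp_rw [integral_const_mul, hgamma, mul_one]
    _ = (Ω / A + 2 * b * (n + 1) / A) ^ n := by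
        rw [add_pow]
        exact sum_congr rfl fun i _ => by ring
    _ = 1 := by rw [← add_div, add_comm Ω, div_self hA.ne', one_pow]
end

section
/- Let (Ω', 𝓕, ℙ) be a probability space, let b > 0, Ω ≥ 0, let m ≥ 1 be an integer, and let X : Ω' → ℝ be a random variable whose probability density function with respect to Lebesgue measure is almost everywhere equal to x ↦ (if x ≥ 0 then 2x · f̃(x²; b, m, Ω) else 0) (the shadowed-Rician amplitude density with integer fading order). Then for every k > 0, the random variable Y = k · X² has probability density function with respect to Lebesgue measure almost everywhere equal to y ↦ (if y ≥ 0 then f̃(y; k·b, m, k·Ω) else 0). That is, a positive multiple of the square of a shadowed-Rician random variable with parameters (b, m, Ω) is squared-shadowed-Rician distributed with parameters (k·b, m, k·Ω). -/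
/-!
The map `x ↦ k x²` is a bijection of `[0, ∞)` with Jacobian `2 k x`, so it pushes the amplitude
density `2x f̃(x²; b, m, Ω)` forward to `f̃(y/k; b, m, Ω) / k`, and the scaling identity
`f̃(k y; k b, m, k Ω) = f̃(y; b, m, Ω) / k` turns this into `f̃(y; k b, m, k Ω)`.

Since `pdf` is only a Radon–Nikodym derivative, the law of `X` is determined by its pdf only when
that pdf has total mass one, so that the singular part vanishes. This holds because `f̃` is a
binomial mixture of Gamma densities: with `c = 2bm + Ω`, integrating term by term gives
`(2bm/c)^(m-1) (1 + Ω/(2bm))^(m-1) = 1`.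
-/

open MeasureTheory
open scoped ProbabilityTheory

open Set Real
open scoped ENNReal

lemma integral_pow_mul_exp_neg_mul_Ioi (i : ℕ) {r : ℝ} (hr : 0 < r) :
    ∫ y in Ioi 0, y ^ i * exp (-(r * y)) = i.factorial / r ^ (i + 1) := by
  have h := integral_rpow_mul_exp_neg_mul_Ioi (a := i + 1) (by positivity) hr
  rw [add_sub_cancel_right, Gamma_nat_eq_factorial, ← Nat.cast_succ, rpow_natCast] at h
  simpa [div_eq_inv_mul] using h

lemma integrableOn_pow_mul_exp_neg_mul_Ioi (i : ℕ) {r : ℝ} (hr : 0 < r) :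
    IntegrableOn (fun y => y ^ i * exp (-(r * y))) (Ioi 0) :=
  Integrable.of_integral_ne_zero <| by
    rw [integral_pow_mul_exp_neg_mul_Ioi i hr]; positivity

lemma integral_sum_choose_mul_pow_mul_exp_neg_mul_Ioi (n : ℕ) (s : ℝ) {r : ℝ} (hr : 0 < r) :
    ∫ y in Ioi 0, ∑ i ∈ Finset.range (n + 1),
        n.choose i * s ^ i / i.factorial * (y ^ i * exp (-(r * y))) = (s / r + 1) ^ n / r := by
  rw [integral_finsetSum _ fun i _ => (integrableOn_pow_mul_exp_neg_mul_Ioi i hr).const_mul _,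
    add_pow, Finset.sum_div]
  refine Finset.sum_congr rfl fun i _ => ?_
  rw [integral_const_mul, integral_pow_mul_exp_neg_mul_Ioi i hr, one_pow, div_pow, pow_succ]
  field_simp

lemma image_mul_sq_Ici {k : ℝ} (hk : 0 < k) : (fun x : ℝ => k * x ^ 2) '' Ici 0 = Ici 0 := by
  refine Subset.antisymm
    (image_subset_iff.mpr fun x _ => by simp only [mem_preimage, mem_Ici]; positivity)
    fun y (hy : 0 ≤ y) => ⟨√(y / k), sqrt_nonneg _, ?_⟩
  simp only [sq_sqrt (div_nonneg hy hk.le)]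
  field_simp

lemma lintegral_Ici_comp_mul_sq {k : ℝ} (hk : 0 < k) (g : ℝ → ℝ≥0∞) :
    ∫⁻ x in Ici 0, ENNReal.ofReal (2 * k * x) * g (k * x ^ 2) = ∫⁻ y in Ici 0, g y := by
  have hderiv : ∀ x ∈ Ici (0 : ℝ),
      HasFDerivWithinAt (fun x : ℝ => k * x ^ 2)
        (ContinuousLinearMap.toSpanSingleton ℝ (2 * k * x)) (Ici 0) x := fun x _ => by
    refine (((hasDerivAt_pow 2 x).const_mul k).congr_deriv ?_).hasDerivWithinAt.hasFDerivWithinAt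
    norm_num; ring
  have hinj : InjOn (fun x : ℝ => k * x ^ 2) (Ici 0) := fun x hx y hy h =>
    (sq_eq_sq₀ hx hy).mp (mul_left_cancel₀ hk.ne' h)
  conv_rhs => rw [← image_mul_sq_Ici hk,
    lintegral_image_eq_lintegral_abs_det_fderiv_mul volume measurableSet_Ici hderiv hinj g]
  refine setLIntegral_congr_fun measurableSet_Ici fun x (hx : 0 ≤ x) => ?_
  rw [ContinuousLinearMap.det_toSpanSingleton, abs_of_nonneg (by positivity)]

lemma map_mul_sq_withDensity_indicator_Ici {k : ℝ} (hk : 0 < k) (g : ℝ → ℝ≥0∞) :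
    (volume.withDensity
        ((Ici 0).indicator fun x => ENNReal.ofReal (2 * k * x) * g (k * x ^ 2))).map
      (fun x => k * x ^ 2) = volume.withDensity ((Ici 0).indicator g) := by
  have hφ : Measurable fun x : ℝ => k * x ^ 2 := by fun_prop
  ext s hs
  rw [Measure.map_apply hφ hs, withDensity_apply _ (hφ hs), withDensity_apply _ hs,
    setLIntegral_indicator measurableSet_Ici, setLIntegral_indicator measurableSet_Ici, inter_comm,
    ← setLIntegral_indicator (hφ hs), inter_comm, ← setLIntegral_indicator hs,
    ← lintegral_Ici_comp_mul_sq hk (s.indicator g)]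
  refine setLIntegral_congr_fun measurableSet_Ici fun x _ => ?_
  rw [indicator_mul_right]
  rfl

lemma MeasureTheory.Measure.eq_withDensity_of_rnDeriv_ae_eq {α : Type*} [MeasurableSpace α]
    {μ ν : Measure α} [IsFiniteMeasure μ] [μ.HaveLebesgueDecomposition ν] {f : α → ℝ≥0∞}
    (hf : μ.rnDeriv ν =ᵐ[ν] f) (hmass : ∫⁻ x, f x ∂ν = μ univ) : μ = ν.withDensity f := by
  have hwd : ν.withDensity (μ.rnDeriv ν) = ν.withDensity f := withDensity_congr_ae hf
  have hsing : μ.singularPart ν univ = 0 := by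
    have h := congrArg (· univ) (μ.singularPart_add_rnDeriv ν)
    simp only [Measure.coe_add, Pi.add_apply, hwd, withDensity_apply _ MeasurableSet.univ,
      Measure.restrict_univ, hmass] at h
    exact (ENNReal.add_left_inj (measure_ne_top μ univ)).mp (by rwa [zero_add])
  rw [← μ.singularPart_add_rnDeriv ν, Measure.measure_univ_eq_zero.mp hsing, zero_add, hwd]

lemma pdf_comp_ae_eq_of_map_withDensity {Ω E F : Type*} [MeasurableSpace Ω] [MeasurableSpace E]
    [MeasurableSpace F] {P : Measure Ω} [IsProbabilityMeasure P] {μ : Measure E} {ν : Measure F}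
    [SigmaFinite μ] [SigmaFinite ν] {X : Ω → E} {φ : E → F} {f : E → ℝ≥0∞} {g : F → ℝ≥0∞}
    (hφ : Measurable φ) (hg : Measurable g) (hX : pdf X P μ =ᵐ[μ] f)
    (hpush : (μ.withDensity f).map φ = ν.withDensity g) (hmass : ∫⁻ y, g y ∂ν = 1) :
    pdf (φ ∘ X) P ν =ᵐ[ν] g := by
  have hf_mass : ∫⁻ x, f x ∂μ = 1 := by
    have h := congrArg (· univ) hpush
    simp only [Measure.map_apply hφ MeasurableSet.univ, preimage_univ,
      withDensity_apply _ MeasurableSet.univ, Measure.restrict_univ] at h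
    rw [h, hmass]
  have hXm : AEMeasurable X P := aemeasurable_of_pdf_ne_zero X fun h0 => by
    simpa [hf_mass] using lintegral_congr_ae (hX.symm.trans h0)
  have hlaw : P.map X = μ.withDensity f := by
    refine Measure.eq_withDensity_of_rnDeriv_ae_eq hX ?_
    rw [hf_mass, Measure.map_apply_of_aemeasurable hXm MeasurableSet.univ, preimage_univ,
      measure_univ]
  rw [pdf_def, ← AEMeasurable.map_map_of_aemeasurable hφ.aemeasurable hXm, hlaw, hpush]
  exact Measure.rnDeriv_withDensity ν hg

lemma continuous_ssrPdf (b : ℝ) (m : ℕ) (Ω : ℝ) : Continuous (ssrPdf b m Ω) := by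
  unfold ssrPdf; fun_prop

lemma ssrPdf_nonneg {b Ω : ℝ} (hb : 0 ≤ b) (hΩ : 0 ≤ Ω) (m : ℕ) {y : ℝ} (hy : 0 ≤ y) :
    0 ≤ ssrPdf b m Ω y := by
  unfold ssrPdf
  have := Finset.sum_nonneg fun i (_ : i ∈ Finset.range m) =>
    (by positivity : (0 : ℝ) ≤ (m - 1).factorial / ((m - 1 - i).factorial * (i.factorial : ℝ) ^ 2)
      * (Ω * y / (2 * b * (2 * b * m + Ω))) ^ i)
  positivity

lemma ssrPdf_mul_mul_mul {k : ℝ} (hk : k ≠ 0) (b : ℝ) (m : ℕ) (Ω y : ℝ) :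
    ssrPdf (k * b) m (k * Ω) (k * y) = ssrPdf b m Ω y / k := by
  unfold ssrPdf
  have hc : 2 * (k * b) * m + k * Ω = k * (2 * b * m + Ω) := by ring
  rw [hc, show 2 * (k * b) * m = k * (2 * b * m) by ring, mul_div_mul_left _ _ hk,
    show -(m * (k * y)) = k * -(m * y) by ring, mul_div_mul_left _ _ hk,
    show k * Ω * (k * y) / (2 * (k * b) * (k * (2 * b * m + Ω))) =
      Ω * y / (2 * b * (2 * b * m + Ω)) by field_simp]
  field_simp

lemma ssrPdf_succ (b : ℝ) (n : ℕ) (Ω y : ℝ) :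
    ssrPdf b (n + 1) Ω y =
      1 / (2 * b) * (2 * b * (n + 1) / (2 * b * (n + 1) + Ω)) ^ (n + 1) *
        ∑ i ∈ Finset.range (n + 1), n.choose i * (Ω / (2 * b * (2 * b * (n + 1) + Ω))) ^ i /
          i.factorial * (y ^ i * exp (-((n + 1) / (2 * b * (n + 1) + Ω) * y))) := by
  simp only [ssrPdf, Nat.add_sub_cancel, Finset.mul_sum]
  push_cast
  refine Finset.sum_congr rfl fun i hi => ?_
  rw [Nat.cast_choose ℝ (Nat.lt_succ_iff.mp (Finset.mem_range.mp hi)), neg_div,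
    mul_div_right_comm _ y, mul_div_right_comm _ y, mul_pow]
  field_simp

lemma integral_ssrPdf_Ioi {b Ω : ℝ} (hb : 0 < b) (hΩ : 0 ≤ Ω) {m : ℕ} (hm : 1 ≤ m) :
    ∫ y in Ioi 0, ssrPdf b m Ω y = 1 := by
  obtain ⟨n, rfl⟩ := Nat.exists_eq_add_of_le' hm
  simp only [ssrPdf_succ]
  rw [integral_const_mul, integral_sum_choose_mul_pow_mul_exp_neg_mul_Ioi n _ (by positivity)]
  have hc : 0 < 2 * b * (n + 1) + Ω := by positivity
  have hbase : Ω / (2 * b * (2 * b * (n + 1) + Ω)) / ((n + 1) / (2 * b * (n + 1) + Ω)) + 1 =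
      (2 * b * (n + 1) + Ω) / (2 * b * (n + 1)) := by
    field_simp; ring
  rw [hbase, div_pow, div_pow, pow_succ]
  field_simp
  ring

noncomputable def ssrDensity (b : ℝ) (m : ℕ) (Ω : ℝ) (y : ℝ) : ℝ≥0∞ :=
  ENNReal.ofReal (if 0 ≤ y then ssrPdf b m Ω y else 0)

noncomputable def shadowedRicianDensity (b : ℝ) (m : ℕ) (Ω : ℝ) (x : ℝ) : ℝ≥0∞ :=
  ENNReal.ofReal (if 0 ≤ x then 2 * x * ssrPdf b m Ω (x ^ 2) else 0)

lemma ssrDensity_eq_indicator (b : ℝ) (m : ℕ) (Ω : ℝ) :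
    ssrDensity b m Ω = (Ici 0).indicator fun y => ENNReal.ofReal (ssrPdf b m Ω y) := by
  funext y
  by_cases hy : 0 ≤ y <;> simp [ssrDensity, hy]

lemma measurable_ssrDensity (b : ℝ) (m : ℕ) (Ω : ℝ) : Measurable (ssrDensity b m Ω) := by
  rw [ssrDensity_eq_indicator]
  exact (continuous_ssrPdf b m Ω).measurable.ennreal_ofReal.indicator measurableSet_Ici

lemma lintegral_ssrDensity {b Ω : ℝ} (hb : 0 < b) (hΩ : 0 ≤ Ω) {m : ℕ} (hm : 1 ≤ m) :
    ∫⁻ y, ssrDensity b m Ω y = 1 := by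
  have hint : IntegrableOn (ssrPdf b m Ω) (Ioi 0) :=
    Integrable.of_integral_ne_zero (by rw [integral_ssrPdf_Ioi hb hΩ hm]; exact one_ne_zero)
  have hnonneg : 0 ≤ᵐ[volume.restrict (Ioi 0)] ssrPdf b m Ω :=
    (ae_restrict_iff' measurableSet_Ioi).mpr
      (ae_of_all _ fun y hy => ssrPdf_nonneg hb.le hΩ m (le_of_lt hy))
  rw [ssrDensity_eq_indicator, lintegral_indicator measurableSet_Ici,
    setLIntegral_congr Ioi_ae_eq_Ici.symm, ← ofReal_integral_eq_lintegral_ofReal hint hnonneg,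
    integral_ssrPdf_Ioi hb hΩ hm, ENNReal.ofReal_one]

lemma shadowedRicianDensity_eq_indicator {k : ℝ} (hk : 0 < k) (b : ℝ) (m : ℕ) (Ω : ℝ) :
    shadowedRicianDensity b m Ω = (Ici 0).indicator fun x =>
      ENNReal.ofReal (2 * k * x) * ENNReal.ofReal (ssrPdf (k * b) m (k * Ω) (k * x ^ 2)) := by
  funext x
  by_cases hx : 0 ≤ x
  · rw [indicator_of_mem (show x ∈ Ici 0 from hx), ← ENNReal.ofReal_mul (by positivity),
      ssrPdf_mul_mul_mul hk.ne', shadowedRicianDensity, if_pos hx]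
    congr 1
    field_simp
  · simp [shadowedRicianDensity, hx]

lemma map_mul_sq_withDensity_shadowedRicianDensity {k : ℝ} (hk : 0 < k) (b : ℝ) (m : ℕ)
    (Ω : ℝ) :
    (volume.withDensity (shadowedRicianDensity b m Ω)).map (fun x => k * x ^ 2) =
      volume.withDensity (ssrDensity (k * b) m (k * Ω)) := by
  rw [shadowedRicianDensity_eq_indicator hk, ssrDensity_eq_indicator]
  exact map_mul_sq_withDensity_indicator_Ici hk
    fun y => ENNReal.ofReal (ssrPdf (k * b) m (k * Ω) y)

theorem scaled_square_of_shadowed_rician_is_ssr_general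
    {Ω' : Type*} [MeasureSpace Ω'] [IsProbabilityMeasure (ℙ : Measure Ω')]
    (b Ω : ℝ) (hb : 0 < b) (hΩ : 0 ≤ Ω) (m : ℕ) (hm : 1 ≤ m)
    (X : Ω' → ℝ)
    (hX : MeasureTheory.pdf X ℙ volume
        =ᵐ[volume] fun x => ENNReal.ofReal (if 0 ≤ x then 2 * x * ssrPdf b m Ω (x ^ 2) else 0))
    (k : ℝ) (hk : 0 < k) :
    MeasureTheory.pdf (fun ω => k * (X ω) ^ 2) ℙ volume
      =ᵐ[volume] fun y => ENNReal.ofReal (if 0 ≤ y then ssrPdf (k * b) m (k * Ω) y else 0) :=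
  pdf_comp_ae_eq_of_map_withDensity (φ := fun x => k * x ^ 2) (by fun_prop)
    (measurable_ssrDensity (k * b) m (k * Ω)) hX
    (map_mul_sq_withDensity_shadowedRicianDensity hk b m Ω)
    (lintegral_ssrDensity (mul_pos hk hb) (mul_nonneg hk.le hΩ) hm)

/-- If `X` has the shadowed-Rician amplitude density `x ↦ 2x·f̃(x²; b, m, Ω)` (for `x ≥ 0`)
with integer fading order `m`, then for any `k > 0` the random variable `Y = k·X²` is
squared-shadowed-Rician with parameters `(k·b, m, k·Ω)`. -/
theorem scaled_square_of_shadowed_rician_is_ssr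
    {Ω' : Type*} [MeasureSpace Ω'] [IsProbabilityMeasure (ℙ : Measure Ω')]
    (b Ω : ℝ) (hb : 0 < b) (hΩ : 0 ≤ Ω) (m : ℕ) (hm : 1 ≤ m)
    (X : Ω' → ℝ) (hXm : Measurable X)
    (hX : MeasureTheory.pdf X ℙ volume
        =ᵐ[volume] fun x => ENNReal.ofReal (if 0 ≤ x then 2 * x * ssrPdf b m Ω (x ^ 2) else 0))
    (k : ℝ) (hk : 0 < k) :
    MeasureTheory.pdf (fun ω => k * (X ω) ^ 2) ℙ volume
      =ᵐ[volume] fun y => ENNReal.ofReal (if 0 ≤ y then ssrPdf (k * b) m (k * Ω) y else 0) :=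
  scaled_square_of_shadowed_rician_is_ssr_general b Ω hb hΩ m hm X hX k hk
end
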